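/- Let $\omega_1,\dots,\omega_{n-1} > 0$ and fix $x = (x',x_n)$ with $\sum_{i<n}\omega_i^2 x_i^2 < x_n$. For $\xi$ with $\xi' \neq 0$ let $z_\pm(x,\xi)$ be the intersections of the paraboloid $\{z : \sum_{i<n}\omega_i^2 z_i^2 = z_n\}$ with the rays $\{x+t\xi : t>0\}$ and $\{x+t\xi : t<0\}$. Then for each $k \geq 1$ the function $J_k(x,\xi) = \frac{|\xi|^k}{|x-z_+(x,\xi)|^k} + (-1)^k\frac{|\xi|^k}{|x-z_-(x,\xi)|^k}$ agrees on $\{\xi : \xi' \neq 0\}$ with a polynomial in $\xi$ of degree at most $k$; consequently $\Delta_\xi^k J_k(x,\xi) = 0$ there. -/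

import Mathlib

/-- Scaled inner product of the first `m` coordinates of vectors in `ℝ^{m+1}`:
`⟨x',ξ'⟩ = ∑ i<m, ω_i² x_i ξ_i`. -/
noncomputable def wipC {m : ℕ} (ω : Fin m → ℝ) (x ξ : Fin (m + 1) → ℝ) : ℝ :=
  ∑ i : Fin m, (ω i) ^ 2 * x i.castSucc * ξ i.castSucc

/-- The Euclidean norm on `Fin (m+1) → ℝ`. -/
noncomputable def enorm' {N : ℕ} (x : Fin N → ℝ) : ℝ := Real.sqrt (∑ i, (x i) ^ 2)

/-- The Laplacian `Δ f x = ∑ j, ∂²f/∂x_j² (x)`. -/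
noncomputable def lap {N : ℕ} (f : (Fin N → ℝ) → ℝ) : (Fin N → ℝ) → ℝ := fun x =>
  ∑ j : Fin N, fderiv ℝ (fun y => fderiv ℝ f y (Pi.single j 1)) x (Pi.single j 1)

/-!
On the line `t ↦ x + t ξ` the paraboloid equation reads `a t² + b t + c = 0` with
`a = ⟨ξ',ξ'⟩`, `b = 2⟨x',ξ'⟩ - ξₙ` and `c = ⟨x',x'⟩ - xₙ < 0`. As `|x - z±| = |t±| |ξ|`, the
function `J_k` equals `u^k + v^k` for the roots `u = 1/t₊`, `v = 1/t₋` of `c u² + b u + a`.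
Their sum `-b/c` is linear and their product `a/c` quadratic in `ξ`, so the recursion
`V (n+2) = (u + v) V (n+1) - u v V n` for `V n = u^n + v^n` shows that `J_k` is a polynomial of
degree at most `k`. Each Laplacian lowers the degree by two, hence `Δ^k` kills it.
-/

open MvPolynomial Topology

namespace MvPolynomial

section Degree

variable {R σ : Type*} [CommSemiring R]

theorem totalDegree_pderiv_le (p : MvPolynomial σ R) (i : σ) :
    (pderiv i p).totalDegree ≤ p.totalDegree - 1 := by
  classical
  refine Finset.sup_le fun n hn => ?_
  have hmem : n + Finsupp.single i 1 ∈ p.support := by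
    rw [mem_support_iff, coeff_pderiv] at hn
    exact mem_support_iff.2 (left_ne_zero_of_mul hn)
  have hdeg := le_totalDegree hmem
  rw [Finsupp.sum_add_index' (fun _ => rfl) (fun _ _ _ => rfl), Finsupp.sum_single_index rfl]
    at hdeg
  omega

theorem pderiv_eq_zero_of_totalDegree_eq_zero {p : MvPolynomial σ R} (hp : p.totalDegree = 0)
    (i : σ) : pderiv i p = 0 := by
  rw [totalDegree_eq_zero_iff_eq_C.1 hp, pderiv_C]

variable [Fintype σ]

noncomputable def laplacian (p : MvPolynomial σ R) : MvPolynomial σ R :=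
  ∑ j, pderiv j (pderiv j p)

theorem totalDegree_laplacian_le (p : MvPolynomial σ R) :
    (laplacian p).totalDegree ≤ p.totalDegree - 2 := by
  refine (totalDegree_finsetSum _ _).trans (Finset.sup_le fun j _ => ?_)
  have := totalDegree_pderiv_le p j
  have := totalDegree_pderiv_le (pderiv j p) j
  omega

theorem laplacian_eq_zero_of_totalDegree_le_one {p : MvPolynomial σ R}
    (hp : p.totalDegree ≤ 1) : laplacian p = 0 :=
  Finset.sum_eq_zero fun j _ =>
    pderiv_eq_zero_of_totalDegree_eq_zero (by have := totalDegree_pderiv_le p j; omega) j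

theorem totalDegree_iterate_laplacian_le (p : MvPolynomial σ R) (j : ℕ) :
    (laplacian^[j] p).totalDegree ≤ p.totalDegree - 2 * j := by
  induction j with
  | zero => simp
  | succ j ih =>
    rw [Function.iterate_succ_apply']
    exact (totalDegree_laplacian_le _).trans (by omega)

theorem iterate_laplacian_eq_zero {p : MvPolynomial σ R} {j : ℕ}
    (hp : p.totalDegree < 2 * j) : laplacian^[j] p = 0 := by
  obtain ⟨j, rfl⟩ := Nat.exists_eq_add_one.2 (by omega : 0 < j)
  rw [Function.iterate_succ_apply']
  exact laplacian_eq_zero_of_totalDegree_le_one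
    ((totalDegree_iterate_laplacian_le p j).trans (by omega))

end Degree

end MvPolynomial

section Lucas

variable {R S : Type*} [CommRing R] [CommRing S]

noncomputable def lucasV (P Q : R) : ℕ → R
  | 0 => 2
  | 1 => P
  | n + 2 => P * lucasV P Q (n + 1) - Q * lucasV P Q n

theorem map_lucasV (f : R →+* S) (P Q : R) : ∀ n, f (lucasV P Q n) = lucasV (f P) (f Q) n
  | 0 => by simp [lucasV, map_ofNat]
  | 1 => rfl
  | n + 2 => by simp only [lucasV, map_sub, map_mul, map_lucasV f P Q n, map_lucasV f P Q (n + 1)]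

theorem lucasV_add_mul (u v : R) : ∀ n, lucasV (u + v) (u * v) n = u ^ n + v ^ n
  | 0 => by norm_num [lucasV]
  | 1 => by simp [lucasV]
  | n + 2 => by
    simp only [lucasV, lucasV_add_mul u v n, lucasV_add_mul u v (n + 1)]
    ring

theorem totalDegree_lucasV_le {σ : Type*} {P Q : MvPolynomial σ R}
    (hP : P.totalDegree ≤ 1) (hQ : Q.totalDegree ≤ 2) : ∀ n, (lucasV P Q n).totalDegree ≤ n
  | 0 => by rw [lucasV, ← map_ofNat C 2, totalDegree_C]
  | 1 => hP
  | n + 2 => by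
    have h₁ := totalDegree_lucasV_le hP hQ (n + 1)
    have h₀ := totalDegree_lucasV_le hP hQ n
    refine (totalDegree_sub _ _).trans (max_le ?_ ?_) <;>
      exact (totalDegree_mul _ _).trans (by omega)

end Lucas

section Calculus

variable {𝕜 ι : Type*} [NontriviallyNormedField 𝕜] [Fintype ι]

namespace MvPolynomial

noncomputable def fderivEval (p : MvPolynomial ι 𝕜) (x : ι → 𝕜) : (ι → 𝕜) →L[𝕜] 𝕜 :=
  ∑ j, eval x (pderiv j p) • ContinuousLinearMap.proj j

@[simp]
theorem fderivEval_apply (p : MvPolynomial ι 𝕜) (x v : ι → 𝕜) :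
    fderivEval p x v = ∑ j, eval x (pderiv j p) * v j := by
  simp [fderivEval]

theorem fderivEval_C (a : 𝕜) (x : ι → 𝕜) : fderivEval (C a) x = 0 := by
  ext v; simp

theorem fderivEval_add (p q : MvPolynomial ι 𝕜) (x : ι → 𝕜) :
    fderivEval (p + q) x = fderivEval p x + fderivEval q x := by
  ext v; simp [add_mul, Finset.sum_add_distrib]

theorem fderivEval_mul (p q : MvPolynomial ι 𝕜) (x : ι → 𝕜) :
    fderivEval (p * q) x = eval x p • fderivEval q x + eval x q • fderivEval p x := by
  ext v
  simp [Finset.mul_sum, ← Finset.sum_add_distrib]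
  exact Finset.sum_congr rfl fun j _ => by ring

theorem fderivEval_X [DecidableEq ι] (i : ι) (x : ι → 𝕜) :
    fderivEval (X i) x = ContinuousLinearMap.proj i := by
  ext v
  simp [pderiv_X, Pi.single_apply]

theorem hasFDerivAt_eval (p : MvPolynomial ι 𝕜) (x : ι → 𝕜) :
    HasFDerivAt (fun y => eval y p) (fderivEval p x) x := by
  classical
  induction p using MvPolynomial.induction_on with
  | C a =>
    simp only [fderivEval_C, eval_C]
    exact hasFDerivAt_const a x
  | add p q hp hq =>
    simp only [fderivEval_add, map_add]
    exact hp.add hq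
  | mul_X p i hp =>
    rw [fderivEval_mul, fderivEval_X, eval_X]
    simp only [map_mul, eval_X]
    exact hp.mul (hasFDerivAt_apply i x)

theorem fderiv_eval_apply_single [DecidableEq ι] (p : MvPolynomial ι 𝕜) (x : ι → 𝕜) (j : ι) :
    fderiv 𝕜 (fun y => eval y p) x (Pi.single j 1) = eval x (pderiv j p) := by
  simp [(hasFDerivAt_eval p x).fderiv, Pi.single_apply]

end MvPolynomial

end Calculus

section Laplacian

variable {N : ℕ}

theorem lap_eval (p : MvPolynomial (Fin N) ℝ) :
    lap (fun y => eval y p) = fun x => eval x (laplacian p) := by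
  funext x
  simp only [lap, fderiv_eval_apply_single, laplacian, map_sum]

theorem Filter.EventuallyEq.lap_eq {f g : (Fin N → ℝ) → ℝ} {x : Fin N → ℝ}
    (h : f =ᶠ[𝓝 x] g) : lap f x = lap g x := by
  refine Finset.sum_congr rfl fun j _ => ?_
  have hj : (fun y => fderiv ℝ f y (Pi.single j 1)) =ᶠ[𝓝 x]
      fun y => fderiv ℝ g y (Pi.single j 1) :=
    (h.fderiv (𝕜 := ℝ)).mono fun y hy => by simp only [hy]
  rw [hj.fderiv_eq]

theorem Set.EqOn.iterate_lap {U : Set (Fin N → ℝ)} (hU : IsOpen U) {f : (Fin N → ℝ) → ℝ}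
    {p : MvPolynomial (Fin N) ℝ} (h : Set.EqOn f (fun y => eval y p) U) (j : ℕ) :
    Set.EqOn (lap^[j] f) (fun y => eval y (laplacian^[j] p)) U := by
  induction j with
  | zero => exact h
  | succ j ih =>
    intro y hy
    rw [Function.iterate_succ_apply', Function.iterate_succ_apply', ← lap_eval]
    exact (ih.eventuallyEq_of_mem (hU.mem_nhds hy)).lap_eq

end Laplacian

section Quadratic

variable {K : Type*} [Field K]

theorem quadratic_inv_eq_zero {a b c t : K} (ht : t ≠ 0) (h : a * t ^ 2 + b * t + c = 0) :
    c * t⁻¹ ^ 2 + b * t⁻¹ + a = 0 := by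
  field_simp
  linear_combination h

theorem vieta_formula_quadratic_of_ne {a b c u v : K} (hu : a * u ^ 2 + b * u + c = 0)
    (hv : a * v ^ 2 + b * v + c = 0) (huv : u ≠ v) : a * (u + v) = -b ∧ a * (u * v) = c := by
  have hsum : a * (u + v) = -b := by
    refine mul_left_cancel₀ (sub_ne_zero.2 huv) ?_
    linear_combination hu - hv
  exact ⟨hsum, by linear_combination u * hsum - hu⟩

end Quadratic

section Norm

variable {N : ℕ}

theorem enorm'_eq_norm (y : Fin N → ℝ) : enorm' y = ‖WithLp.toLp 2 y‖ := by
  simp [enorm', EuclideanSpace.norm_eq]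

theorem enorm'_smul (t : ℝ) (y : Fin N → ℝ) : enorm' (t • y) = |t| * enorm' y := by
  rw [enorm'_eq_norm, enorm'_eq_norm, WithLp.toLp_smul, norm_smul, Real.norm_eq_abs]

theorem enorm'_ne_zero {y : Fin N → ℝ} (hy : y ≠ 0) : enorm' y ≠ 0 := by
  rw [enorm'_eq_norm, norm_ne_zero_iff]
  exact fun h => hy (WithLp.toLp_injective 2 (by simpa using h))

theorem enorm'_pow_div_enorm'_sub_add_smul (k : ℕ) (x : Fin N → ℝ) {ξ : Fin N → ℝ}
    (hξ : ξ ≠ 0) (t : ℝ) : enorm' ξ ^ k / enorm' (x - (x + t • ξ)) ^ k = |t⁻¹| ^ k := by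
  rw [sub_add_cancel_left, ← neg_smul, enorm'_smul, abs_neg, mul_pow, abs_inv, inv_pow,
    div_mul_cancel_right₀ (pow_ne_zero k (enorm'_ne_zero hξ))]

end Norm

section Paraboloid

variable {m : ℕ} (ω : Fin m → ℝ) (x : Fin (m + 1) → ℝ)

theorem wipC_add_smul (ξ : Fin (m + 1) → ℝ) (t : ℝ) :
    wipC ω (x + t • ξ) (x + t • ξ) = wipC ω x x + 2 * t * wipC ω x ξ + t ^ 2 * wipC ω ξ ξ := by
  simp only [wipC, Pi.add_apply, Pi.smul_apply, smul_eq_mul, Finset.mul_sum,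
    ← Finset.sum_add_distrib]
  exact Finset.sum_congr rfl fun i _ => by ring

theorem quadratic_eq_zero_of_add_smul_mem_paraboloid {ξ : Fin (m + 1) → ℝ} {t : ℝ}
    (h : wipC ω (x + t • ξ) (x + t • ξ) = (x + t • ξ) (Fin.last m)) :
    wipC ω ξ ξ * t ^ 2 + (2 * wipC ω x ξ - ξ (Fin.last m)) * t +
      (wipC ω x x - x (Fin.last m)) = 0 := by
  rw [wipC_add_smul] at h
  simp only [Pi.add_apply, Pi.smul_apply, smul_eq_mul] at h
  linear_combination h

noncomputable def invChordSum : MvPolynomial (Fin (m + 1)) ℝ :=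
  C (-(wipC ω x x - x (Fin.last m))⁻¹) *
    (∑ i : Fin m, C (2 * ω i ^ 2 * x i.castSucc) * X i.castSucc - X (Fin.last m))

noncomputable def invChordProd : MvPolynomial (Fin (m + 1)) ℝ :=
  C (wipC ω x x - x (Fin.last m))⁻¹ * ∑ i : Fin m, C (ω i ^ 2) * X i.castSucc ^ 2

theorem totalDegree_invChordSum_le : (invChordSum ω x).totalDegree ≤ 1 := by
  refine (totalDegree_mul _ _).trans ?_
  rw [totalDegree_C, zero_add]
  refine (totalDegree_sub _ _).trans (max_le ?_ (totalDegree_X _).le)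
  refine (totalDegree_finsetSum _ _).trans (Finset.sup_le fun i _ => ?_)
  exact (totalDegree_mul _ _).trans (by rw [totalDegree_C, totalDegree_X])

theorem totalDegree_invChordProd_le : (invChordProd ω x).totalDegree ≤ 2 := by
  refine (totalDegree_mul _ _).trans ?_
  rw [totalDegree_C, zero_add]
  refine (totalDegree_finsetSum _ _).trans (Finset.sup_le fun i _ => ?_)
  exact (totalDegree_mul _ _).trans (by rw [totalDegree_C, totalDegree_X_pow])

theorem eval_invChordSum (ξ : Fin (m + 1) → ℝ) :
    eval ξ (invChordSum ω x) =
      -(2 * wipC ω x ξ - ξ (Fin.last m)) / (wipC ω x x - x (Fin.last m)) := by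
  simp only [invChordSum, wipC, map_mul, map_sub, map_sum, eval_C, eval_X, Finset.mul_sum]
  rw [neg_div, div_eq_inv_mul, neg_mul]
  congr 3
  exact Finset.sum_congr rfl fun i _ => by ring

theorem eval_invChordProd (ξ : Fin (m + 1) → ℝ) :
    eval ξ (invChordProd ω x) = wipC ω ξ ξ / (wipC ω x x - x (Fin.last m)) := by
  simp only [invChordProd, wipC, map_mul, map_sum, map_pow, eval_C, eval_X, div_eq_inv_mul]
  congr 1
  exact Finset.sum_congr rfl fun i _ => by ring

theorem eval_invChordSum_and_eval_invChordProd (hx : wipC ω x x ≠ x (Fin.last m))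
    {ξ : Fin (m + 1) → ℝ} {s t : ℝ}
    (hs : wipC ω (x + s • ξ) (x + s • ξ) = (x + s • ξ) (Fin.last m))
    (ht : wipC ω (x + t • ξ) (x + t • ξ) = (x + t • ξ) (Fin.last m))
    (hs₀ : s ≠ 0) (ht₀ : t ≠ 0) (hst : s ≠ t) :
    eval ξ (invChordSum ω x) = s⁻¹ + t⁻¹ ∧ eval ξ (invChordProd ω x) = s⁻¹ * t⁻¹ := by
  have hc : wipC ω x x - x (Fin.last m) ≠ 0 := sub_ne_zero.2 hx
  obtain ⟨hsum, hprod⟩ := vieta_formula_quadratic_of_ne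
    (quadratic_inv_eq_zero hs₀ (quadratic_eq_zero_of_add_smul_mem_paraboloid ω x hs))
    (quadratic_inv_eq_zero ht₀ (quadratic_eq_zero_of_add_smul_mem_paraboloid ω x ht))
    (inv_injective.ne hst)
  rw [eval_invChordSum, eval_invChordProd, div_eq_iff hc, div_eq_iff hc]
  constructor <;> linarith

end Paraboloid

theorem stmt11_general {m : ℕ} (ω : Fin m → ℝ) (x : Fin (m + 1) → ℝ)
    (hx : wipC ω x x < x (Fin.last m))
    (k : ℕ) (hk : 1 ≤ k) (zp zm : (Fin (m + 1) → ℝ) → (Fin (m + 1) → ℝ))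
    (hzp : ∀ ξ : Fin (m + 1) → ℝ, (∃ i : Fin m, ξ i.castSucc ≠ 0) →
      (∃ t > (0:ℝ), zp ξ = x + t • ξ) ∧ wipC ω (zp ξ) (zp ξ) = zp ξ (Fin.last m))
    (hzm : ∀ ξ : Fin (m + 1) → ℝ, (∃ i : Fin m, ξ i.castSucc ≠ 0) →
      (∃ t < (0:ℝ), zm ξ = x + t • ξ) ∧ wipC ω (zm ξ) (zm ξ) = zm ξ (Fin.last m))
    (J : (Fin (m + 1) → ℝ) → ℝ)
    (hJ : ∀ ξ : Fin (m + 1) → ℝ, (∃ i : Fin m, ξ i.castSucc ≠ 0) →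
      J ξ = enorm' ξ ^ k / enorm' (x - zp ξ) ^ k +
        (-1 : ℝ) ^ k * (enorm' ξ ^ k / enorm' (x - zm ξ) ^ k)) :
    ∃ p : MvPolynomial (Fin (m + 1)) ℝ, p.totalDegree ≤ k ∧
      (∀ ξ : Fin (m + 1) → ℝ, (∃ i : Fin m, ξ i.castSucc ≠ 0) →
        J ξ = MvPolynomial.eval ξ p) ∧
      (∀ ξ : Fin (m + 1) → ℝ, (∃ i : Fin m, ξ i.castSucc ≠ 0) →
        lap^[k] J ξ = 0) := by
  set p := lucasV (invChordSum ω x) (invChordProd ω x) k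
  have hp : p.totalDegree ≤ k :=
    totalDegree_lucasV_le (totalDegree_invChordSum_le ω x) (totalDegree_invChordProd_le ω x) k
  have hJp : ∀ ξ : Fin (m + 1) → ℝ, (∃ i : Fin m, ξ i.castSucc ≠ 0) → J ξ = eval ξ p := by
    intro ξ hξ
    obtain ⟨⟨s, hs, hzps⟩, hzp_mem⟩ := hzp ξ hξ
    obtain ⟨⟨t, ht, hzmt⟩, hzm_mem⟩ := hzm ξ hξ
    have hξ₀ : ξ ≠ 0 := fun h => by simp [h] at hξ
    obtain ⟨hsum, hprod⟩ := eval_invChordSum_and_eval_invChordProd ω x hx.ne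
      (hzps ▸ hzp_mem) (hzmt ▸ hzm_mem) hs.ne' ht.ne (by linarith)
    rw [hJ ξ hξ, hzps, hzmt, enorm'_pow_div_enorm'_sub_add_smul k x hξ₀,
      enorm'_pow_div_enorm'_sub_add_smul k x hξ₀, abs_of_pos (inv_pos.2 hs),
      abs_of_neg (inv_lt_zero.2 ht), ← neg_pow, neg_neg, map_lucasV, hsum, hprod, lucasV_add_mul]
  have hU : IsOpen {ξ : Fin (m + 1) → ℝ | ∃ i : Fin m, ξ i.castSucc ≠ 0} := by
    simp only [Set.ofPred_exists]
    exact isOpen_iUnion fun i => isOpen_ne_fun (continuous_apply _) continuous_const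
  refine ⟨p, hp, hJp, fun ξ hξ => ?_⟩
  rw [Set.EqOn.iterate_lap hU hJp k hξ, iterate_laplacian_eq_zero (by omega)]
  exact map_zero _

theorem stmt11 {m : ℕ} (ω : Fin m → ℝ) (x : Fin (m + 1) → ℝ) (hω : ∀ i, 0 < ω i)
    (hx : wipC ω x x < x (Fin.last m))
    (k : ℕ) (hk : 1 ≤ k) (zp zm : (Fin (m + 1) → ℝ) → (Fin (m + 1) → ℝ))
    (hzp : ∀ ξ : Fin (m + 1) → ℝ, (∃ i : Fin m, ξ i.castSucc ≠ 0) →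
      (∃ t > (0:ℝ), zp ξ = x + t • ξ) ∧ wipC ω (zp ξ) (zp ξ) = zp ξ (Fin.last m))
    (hzm : ∀ ξ : Fin (m + 1) → ℝ, (∃ i : Fin m, ξ i.castSucc ≠ 0) →
      (∃ t < (0:ℝ), zm ξ = x + t • ξ) ∧ wipC ω (zm ξ) (zm ξ) = zm ξ (Fin.last m))
    (J : (Fin (m + 1) → ℝ) → ℝ)
    (hJ : ∀ ξ : Fin (m + 1) → ℝ, (∃ i : Fin m, ξ i.castSucc ≠ 0) →
      J ξ = enorm' ξ ^ k / enorm' (x - zp ξ) ^ k +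
        (-1 : ℝ) ^ k * (enorm' ξ ^ k / enorm' (x - zm ξ) ^ k)) :
    ∃ p : MvPolynomial (Fin (m + 1)) ℝ, p.totalDegree ≤ k ∧
      (∀ ξ : Fin (m + 1) → ℝ, (∃ i : Fin m, ξ i.castSucc ≠ 0) →
        J ξ = MvPolynomial.eval ξ p) ∧
      (∀ ξ : Fin (m + 1) → ℝ, (∃ i : Fin m, ξ i.castSucc ≠ 0) →
        lap^[k] J ξ = 0) :=
  stmt11_general ω x hx k hk zp zm hzp hzm J hJ
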